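/- As z → ∞ with Im z > 0, z·( D(z)/D_∞ − 1 ) converges to d₁ = Σ_{j=0}^{p−2} β_j √(b−x_j)√(a−x_j) − Σ_{j=p+1}^{m} β_j √(x_j−b)√(x_j−a); that is, D(z) = D_∞ (1 + d₁ z^{−1} + o(z^{−1})) in the upper half-plane. -/

import Mathlib

/-- The principal complex square root. -/
noncomputable def csqrt (w : ℂ) : ℂ := w ^ ((1 : ℂ) / 2)

/-- `β_j = (1/(2πi)) log(s_j/s_{j+1})`. -/
noncomputable def betaCoef (s : ℕ → ℝ) (j : ℕ) : ℂ :=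
  1 / (2 * ↑Real.pi * Complex.I) * ↑(Real.log (s j / s (j + 1)))

/-- `R_j(z)` for `0 ≤ j ≤ p−2` (so `x_j < a < b`). -/
noncomputable def Rlow (a b xj : ℝ) (z : ℂ) : ℂ :=
  (csqrt (z - ↑a) * ↑(Real.sqrt (b - xj)) - csqrt (z - ↑b) * ↑(Real.sqrt (a - xj))) /
  (csqrt (z - ↑a) * ↑(Real.sqrt (b - xj)) + csqrt (z - ↑b) * ↑(Real.sqrt (a - xj)))

/-- `R_j(z)` for `p+1 ≤ j ≤ m` (so `a < b < x_j`). -/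
noncomputable def Rhigh (a b xj : ℝ) (z : ℂ) : ℂ :=
  (csqrt (z - ↑b) * ↑(Real.sqrt (xj - a)) - csqrt (z - ↑a) * ↑(Real.sqrt (xj - b))) /
  (csqrt (z - ↑b) * ↑(Real.sqrt (xj - a)) + csqrt (z - ↑a) * ↑(Real.sqrt (xj - b)))

/-- The Szegő-type function `D` of the `s_p = 0` analysis:
`D(z) = ∏_{j=0}^{p−2} R_j(z)^{β_j} · ∏_{j=p+1}^m R_j(z)^{β_j}` for `Im z > 0`,
and the same product with exponents `−β_j` for `Im z < 0`. -/
noncomputable def szegoDGap (m p : ℕ) (x s : ℕ → ℝ) (z : ℂ) : ℂ :=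
  if 0 < z.im then
    (∏ j ∈ Finset.range (p - 1), Rlow (x (p - 1)) (x p) (x j) z ^ betaCoef s j) *
      (∏ j ∈ Finset.Icc (p + 1) m, Rhigh (x (p - 1)) (x p) (x j) z ^ betaCoef s j)
  else
    (∏ j ∈ Finset.range (p - 1), Rlow (x (p - 1)) (x p) (x j) z ^ (-betaCoef s j)) *
      (∏ j ∈ Finset.Icc (p + 1) m, Rhigh (x (p - 1)) (x p) (x j) z ^ (-betaCoef s j))

/-- The constant `D_∞`, the limit of `D(z)` as `z → ∞` in the upper half-plane. -/
noncomputable def szegoDGapInfty (m p : ℕ) (x s : ℕ → ℝ) : ℂ :=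
  (∏ j ∈ Finset.range (p - 1),
      ((↑((Real.sqrt (x p - x j) - Real.sqrt (x (p - 1) - x j)) /
          (Real.sqrt (x p - x j) + Real.sqrt (x (p - 1) - x j))) : ℂ)) ^ betaCoef s j) *
    (∏ j ∈ Finset.Icc (p + 1) m,
      ((↑((Real.sqrt (x j - x (p - 1)) - Real.sqrt (x j - x p)) /
          (Real.sqrt (x j - x (p - 1)) + Real.sqrt (x j - x p))) : ℂ)) ^ betaCoef s j)

open Filter Complex Topology

lemma csqrt_mul_self {w : ℂ} (hw : w ≠ 0) : csqrt w * csqrt w = w := by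
  rw [csqrt, ← Complex.cpow_add _ _ hw]
  norm_num

lemma csqrt_ne_zero {w : ℂ} (hw : w ≠ 0) : csqrt w ≠ 0 := by
  rw [csqrt]
  simp [Complex.cpow_eq_zero_iff, hw]

lemma arg_pos_of_im_pos {w : ℂ} (hw : 0 < w.im) : 0 < w.arg := by
  rcases lt_or_eq_of_le (Complex.arg_nonneg_iff.mpr hw.le) with h | h
  · exact h
  · have := Complex.arg_eq_zero_iff.mp h.symm
    linarith [this.2]

lemma arg_lt_pi_of_im_pos {w : ℂ} (hw : 0 < w.im) : w.arg < Real.pi := by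
  refine lt_of_le_of_ne (Complex.arg_le_pi w) fun h => ?_
  have := Complex.arg_eq_pi_iff.mp h
  linarith [this.2]

lemma csqrt_re_pos {w : ℂ} (hw : 0 < w.im) : 0 < (csqrt w).re := by
  have hw0 : w ≠ 0 := fun h => by simp [h] at hw
  rw [csqrt, show (1:ℂ)/2 = ((1/2 : ℝ) : ℂ) by norm_num,
    Complex.cpow_def_of_ne_zero hw0, Complex.exp_re]
  have h1 : (Complex.log w * ((1/2:ℝ):ℂ)).im = w.arg * (1/2) := by
    simp [Complex.mul_im, Complex.log_im]
  rw [h1]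
  have h2 := arg_pos_of_im_pos hw
  have h3 := arg_lt_pi_of_im_pos hw
  have hpi := Real.pi_pos
  have : 0 < Real.cos (w.arg * (1/2)) := by
    apply Real.cos_pos_of_mem_Ioo
    constructor <;> [linarith; linarith]
  positivity

lemma csqrt_im_pos {w : ℂ} (hw : 0 < w.im) : 0 < (csqrt w).im := by
  have hw0 : w ≠ 0 := fun h => by simp [h] at hw
  rw [csqrt, show (1:ℂ)/2 = ((1/2 : ℝ) : ℂ) by norm_num,
    Complex.cpow_def_of_ne_zero hw0, Complex.exp_im]
  have h1 : (Complex.log w * ((1/2:ℝ):ℂ)).im = w.arg * (1/2) := by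
    simp [Complex.mul_im, Complex.log_im]
  rw [h1]
  have h2 := arg_pos_of_im_pos hw
  have h3 := arg_lt_pi_of_im_pos hw
  have hpi := Real.pi_pos
  have : 0 < Real.sin (w.arg * (1/2)) := by
    apply Real.sin_pos_of_pos_of_lt_pi <;> linarith
  positivity

section FilterLemmas

variable {l : Filter ℂ}

lemma tendsto_inv_shift (hab : Tendsto (fun z : ℂ => ‖z‖) l atTop) (d : ℝ) :
    Tendsto (fun z : ℂ => (z - (d:ℂ))⁻¹) l (𝓝 0) := by
  have h2 : ∀ z : ℂ, ‖z‖ + -|d| ≤ ‖z - (d:ℂ)‖ := by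
    intro z
    have := norm_sub_norm_le z (d : ℂ)
    simp only [Complex.norm_real, Real.norm_eq_abs] at this
    linarith
  have h1 : Tendsto (fun z : ℂ => ‖z - (d:ℂ)‖) l atTop :=
    tendsto_atTop_mono h2 (tendsto_atTop_add_const_right _ (-|d|) hab)
  apply tendsto_zero_iff_norm_tendsto_zero.mpr
  simp only [norm_inv]
  exact tendsto_inv_atTop_zero.comp h1

lemma im_pos_ne_zero {z : ℂ} (hz : 0 < z.im) : z ≠ 0 := by
  intro h; rw [h] at hz; simp at hz

lemma im_pos_sub_ne {z : ℂ} (hz : 0 < z.im) (d : ℝ) : z - (d:ℂ) ≠ 0 := by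
  apply im_pos_ne_zero; simpa using hz

lemma gen1 (hab : Tendsto (fun z : ℂ => ‖z‖) l atTop) (him : ∀ᶠ z in l, 0 < z.im)
    {f : ℂ → ℂ} {c : ℂ}
    (h : Tendsto (fun z => z * (f z - 1)) l (𝓝 c)) : Tendsto f l (𝓝 1) := by
  have hinv : Tendsto (fun z : ℂ => z⁻¹) l (𝓝 0) := by
    simpa using tendsto_inv_shift hab 0
  have h2 : Tendsto (fun z => (z * (f z - 1)) * z⁻¹ + 1) l (𝓝 (c * 0 + 1)) :=
    (h.mul hinv).add tendsto_const_nhds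
  rw [mul_zero, zero_add] at h2
  refine h2.congr' ?_
  filter_upwards [him] with z hz
  have hz0 : z ≠ 0 := im_pos_ne_zero hz
  field_simp
  ring

lemma gen2 {f : ℂ → ℂ} {c β : ℂ} (h1 : Tendsto f l (𝓝 1))
    (h : Tendsto (fun z => z * (f z - 1)) l (𝓝 c)) :
    Tendsto (fun z => z * (f z ^ β - 1)) l (𝓝 (β * c)) := by
  set G : ℂ → ℂ := fun w => if w = 1 then β else (w ^ β - 1) / (w - 1) with hGdef
  have hG : Tendsto G (𝓝 1) (𝓝 β) := by
    rw [← nhdsNE_sup_pure (1:ℂ), tendsto_sup]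
    constructor
    · have hd : HasDerivAt (fun w : ℂ => w ^ β) (β * (1:ℂ) ^ (β - 1)) 1 :=
        (Complex.hasStrictDerivAt_cpow_const one_mem_slitPlane).hasDerivAt
      have hs := hasDerivAt_iff_tendsto_slope.mp hd
      rw [Complex.one_cpow, mul_one] at hs
      refine hs.congr' ?_
      filter_upwards [self_mem_nhdsWithin] with w hw
      have hw1 : w ≠ 1 := hw
      rw [slope_def_field, Complex.one_cpow, hGdef]
      simp [hw1]
    · rw [tendsto_pure_left]
      intro t ht
      simpa [hGdef] using mem_of_mem_nhds ht
  have hid : ∀ z : ℂ, z * (f z ^ β - 1) = G (f z) * (z * (f z - 1)) := by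
    intro z
    by_cases hz : f z = 1
    · simp [hGdef, hz, Complex.one_cpow]
    · rw [hGdef]
      simp only [if_neg hz]
      have hne : f z - 1 ≠ 0 := sub_ne_zero.mpr hz
      field_simp
  have hcomb := (hG.comp h1).mul h
  exact hcomb.congr fun z => (hid z).symm

lemma gen3 (hab : Tendsto (fun z : ℂ => ‖z‖) l atTop) (him : ∀ᶠ z in l, 0 < z.im)
    {ι : Type*} (s : Finset ι) (f : ι → ℂ → ℂ) (c : ι → ℂ)
    (h : ∀ j ∈ s, Tendsto (fun z => z * (f j z - 1)) l (𝓝 (c j))) :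
    Tendsto (fun z => z * ((∏ j ∈ s, f j z) - 1)) l (𝓝 (∑ j ∈ s, c j)) := by
  classical
  induction s using Finset.cons_induction with
  | empty => simpa using (tendsto_const_nhds : Tendsto (fun _ : ℂ => (0:ℂ)) l _)
  | cons a s ha ih =>
    have hP := ih (fun j hj => h j (Finset.mem_cons_of_mem hj))
    have hPa := h a (Finset.mem_cons_self a s)
    have hP1 : Tendsto (fun z => ∏ j ∈ s, f j z) l (𝓝 1) := gen1 hab him hP
    have hcomb : Tendsto
        (fun z => (z * (f a z - 1)) * (∏ j ∈ s, f j z) + z * ((∏ j ∈ s, f j z) - 1)) l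
        (𝓝 (c a * 1 + ∑ j ∈ s, c j)) := (hPa.mul hP1).add hP
    rw [mul_one] at hcomb
    simp only [Finset.prod_cons, Finset.sum_cons]
    exact hcomb.congr fun z => by ring

end FilterLemmas

section T

variable {l : Filter ℂ}

lemma re_t_pos {z : ℂ} (hz : 0 < z.im) (c d : ℝ) :
    0 < (csqrt (z - (c:ℂ)) / csqrt (z - (d:ℂ))).re := by
  have hc : 0 < (z - (c:ℂ)).im := by simpa using hz
  have hd : 0 < (z - (d:ℂ)).im := by simpa using hz
  have h1 := csqrt_re_pos hc
  have h2 := csqrt_im_pos hc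
  have h3 := csqrt_re_pos hd
  have h4 := csqrt_im_pos hd
  have h5 : 0 < Complex.normSq (csqrt (z - (d:ℂ))) :=
    Complex.normSq_pos.mpr (csqrt_ne_zero (im_pos_sub_ne hz d))
  rw [Complex.div_re]
  positivity

lemma t_sq {z : ℂ} (hz : 0 < z.im) (c d : ℝ) :
    (csqrt (z - (c:ℂ)) / csqrt (z - (d:ℂ))) * (csqrt (z - (c:ℂ)) / csqrt (z - (d:ℂ)))
      = (z - (c:ℂ)) / (z - (d:ℂ)) := by
  rw [div_mul_div_comm, csqrt_mul_self (im_pos_sub_ne hz c), csqrt_mul_self (im_pos_sub_ne hz d)]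

lemma t_tendsto (hab : Tendsto (fun z : ℂ => ‖z‖) l atTop) (him : ∀ᶠ z in l, 0 < z.im) (c d : ℝ) :
    Tendsto (fun z => csqrt (z - (c:ℂ)) / csqrt (z - (d:ℂ))) l (𝓝 1) := by
  have hq : Tendsto (fun z : ℂ => ((d:ℂ) - c) * (z - (d:ℂ))⁻¹) l (𝓝 0) := by
    simpa using tendsto_const_nhds.mul (tendsto_inv_shift hab d)
  rw [tendsto_iff_norm_sub_tendsto_zero]
  apply squeeze_zero' (Eventually.of_forall fun z => norm_nonneg _) ?_
    (tendsto_zero_iff_norm_tendsto_zero.mp hq)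
  filter_upwards [him] with z hz
  set t := csqrt (z - (c:ℂ)) / csqrt (z - (d:ℂ)) with htdef
  have h1 : 0 < t.re := re_t_pos hz c d
  have hzd : z - (d:ℂ) ≠ 0 := im_pos_sub_ne hz d
  have habs : ‖t - 1‖ * ‖t + 1‖ = ‖((d:ℂ) - c) * (z - (d:ℂ))⁻¹‖ := by
    rw [← norm_mul]
    congr 1
    have h2 : (t - 1) * (t + 1) = t * t - 1 := by ring
    rw [h2, htdef, t_sq hz c d]
    field_simp
    ring
  have h2 : 1 ≤ ‖t + 1‖ := by
    have h3 := Complex.abs_re_le_norm (t + 1)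
    rw [Complex.add_re, Complex.one_re] at h3
    have : |t.re + 1| ≥ t.re + 1 := le_abs_self _
    linarith
  calc ‖t - 1‖ = ‖t - 1‖ * 1 := by ring
    _ ≤ ‖t - 1‖ * ‖t + 1‖ := by
        apply mul_le_mul_of_nonneg_left h2 (norm_nonneg _)
    _ = ‖((d:ℂ) - c) * (z - (d:ℂ))⁻¹‖ := habs

lemma one_add_t_ne {z : ℂ} (hz : 0 < z.im) (c d : ℝ) :
    1 + csqrt (z - (c:ℂ)) / csqrt (z - (d:ℂ)) ≠ 0 := by
  intro h
  have h1 := re_t_pos hz c d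
  have := congrArg Complex.re h
  rw [Complex.add_re, Complex.one_re, Complex.zero_re] at this
  linarith

lemma t_rate (hab : Tendsto (fun z : ℂ => ‖z‖) l atTop) (him : ∀ᶠ z in l, 0 < z.im) (c d : ℝ) :
    Tendsto (fun z => z * (1 - csqrt (z - (c:ℂ)) / csqrt (z - (d:ℂ)))) l
      (𝓝 (((c:ℂ) - d) / 2)) := by
  have ht := t_tendsto hab him c d
  have h1 : Tendsto (fun z : ℂ => ((c:ℂ) - d) * (1 + (d:ℂ) * (z - (d:ℂ))⁻¹)) l
      (𝓝 (((c:ℂ) - d) * (1 + (d:ℂ) * 0))) :=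
    tendsto_const_nhds.mul (tendsto_const_nhds.add (tendsto_const_nhds.mul (tendsto_inv_shift hab d)))
  have h2 : Tendsto (fun z => (1 + csqrt (z - (c:ℂ)) / csqrt (z - (d:ℂ)))⁻¹) l
      (𝓝 ((1 + 1 : ℂ)⁻¹)) := (tendsto_const_nhds.add ht).inv₀ (by norm_num)
  have hcomb := h1.mul h2
  have hval : (((c:ℂ) - d) * (1 + (d:ℂ) * 0)) * (1 + 1 : ℂ)⁻¹ = ((c:ℂ) - d) / 2 := by
    norm_num; ring
  rw [hval] at hcomb
  refine hcomb.congr' ?_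
  filter_upwards [him] with z hz
  have hzd : z - (d:ℂ) ≠ 0 := im_pos_sub_ne hz d
  have h1t := one_add_t_ne hz c d
  have hsq := t_sq hz c d
  set t := csqrt (z - (c:ℂ)) / csqrt (z - (d:ℂ)) with htdef
  clear_value t
  have key : (1 - t) * (1 + t) * (z - (d:ℂ)) = (c:ℂ) - d := by
    calc (1 - t) * (1 + t) * (z - (d:ℂ)) = (1 - t * t) * (z - (d:ℂ)) := by ring
      _ = (1 - (z - (c:ℂ)) / (z - (d:ℂ))) * (z - (d:ℂ)) := by rw [hsq]
      _ = (c:ℂ) - d := by field_simp; ring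
  have hsq' : t * t * (z - (d:ℂ)) = z - (c:ℂ) := by
    rw [hsq]; field_simp
  field_simp
  linear_combination z * hsq'

end T

lemma cpow_mul_ofReal_pos {w : ℂ} (hw : w ≠ 0) {r : ℝ} (hr : 0 < r) (β : ℂ) :
    (w * (r:ℂ)) ^ β = w ^ β * ((r:ℂ)) ^ β := by
  have hr0 : ((r:ℂ)) ≠ 0 := Complex.ofReal_ne_zero.mpr (ne_of_gt hr)
  have hwr : w * (r:ℂ) ≠ 0 := mul_ne_zero hw hr0
  rw [Complex.cpow_def_of_ne_zero hwr, Complex.cpow_def_of_ne_zero hw,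
    Complex.cpow_def_of_ne_zero hr0, Complex.log_mul_ofReal r hr w hw,
    ← Complex.exp_add]
  congr 1
  rw [← Complex.ofReal_log hr.le]
  ring

section Key

variable {l : Filter ℂ}

lemma key_factor (hab : Tendsto (fun z : ℂ => ‖z‖) l atTop) (him : ∀ᶠ z in l, 0 < z.im)
    (c d A B : ℝ) (hA : 0 < A) (hAB : A < B) :
    Tendsto (fun z => z * ((csqrt (z - (d:ℂ)) * (B:ℂ) - csqrt (z - (c:ℂ)) * (A:ℂ)) /
        (csqrt (z - (d:ℂ)) * (B:ℂ) + csqrt (z - (c:ℂ)) * (A:ℂ)) / (((B - A)/(B + A) : ℝ) : ℂ)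
        - 1)) l
      (𝓝 (((A * B * (c - d) / (B^2 - A^2) : ℝ) : ℂ))) := by
  have hB : (0:ℝ) < B := lt_trans hA hAB
  have hBA : (0:ℝ) < B - A := by linarith
  have e1 : ((B:ℂ) - A) ≠ 0 := by
    have : (B - A : ℝ) ≠ 0 := ne_of_gt hBA
    exact_mod_cast this
  have e2 : ((B:ℂ) + A) ≠ 0 := by
    have : (B + A : ℝ) ≠ 0 := by positivity
    exact_mod_cast this
  have e3 : ((B:ℂ) + 1 * A) ≠ 0 := by rw [one_mul]; exact e2
  have hBA' : ((B:ℂ) - A) * ((B:ℂ) + 1 * A) ≠ 0 := mul_ne_zero e1 e3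
  have ht := t_tendsto hab him c d
  have hr := t_rate hab him c d
  have hcoef : Tendsto (fun z => 2 * (A:ℂ) * B /
      (((B:ℂ) - A) * ((B:ℂ) + (csqrt (z - (c:ℂ)) / csqrt (z - (d:ℂ))) * A))) l
      (𝓝 (2 * (A:ℂ) * B / (((B:ℂ) - A) * ((B:ℂ) + 1 * A)))) :=
    tendsto_const_nhds.div
      (tendsto_const_nhds.mul (tendsto_const_nhds.add (ht.mul tendsto_const_nhds))) hBA'
  have hcomb := hcoef.mul hr
  have hval : (2 * (A:ℂ) * B / (((B:ℂ) - A) * ((B:ℂ) + 1 * A))) * (((c:ℂ) - d) / 2)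
      = ((A * B * (c - d) / (B^2 - A^2) : ℝ) : ℂ) := by
    have e4 : ((B:ℂ)^2 - (A:ℂ)^2) ≠ 0 := by
      have : (B^2 - A^2 : ℝ) ≠ 0 := by nlinarith
      exact_mod_cast this
    push_cast
    field_simp
    ring
  rw [hval] at hcomb
  refine hcomb.congr' ?_
  filter_upwards [him] with z hz
  have hu : csqrt (z - (d:ℂ)) ≠ 0 := csqrt_ne_zero (im_pos_sub_ne hz d)
  have hv : csqrt (z - (c:ℂ)) ≠ 0 := csqrt_ne_zero (im_pos_sub_ne hz c)
  have htre := re_t_pos hz c d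
  have hure : 0 < (csqrt (z - (d:ℂ))).re := csqrt_re_pos (by simpa using hz)
  have hvre : 0 < (csqrt (z - (c:ℂ))).re := csqrt_re_pos (by simpa using hz)
  have hden : csqrt (z - (d:ℂ)) * (B:ℂ) + csqrt (z - (c:ℂ)) * (A:ℂ) ≠ 0 := by
    intro h
    have h' := congrArg Complex.re h
    simp only [Complex.add_re, Complex.mul_re, Complex.ofReal_re, Complex.ofReal_im,
      Complex.zero_re, mul_zero, sub_zero] at h'
    nlinarith
  have hBt : (B:ℂ) + (csqrt (z - (c:ℂ)) / csqrt (z - (d:ℂ))) * (A:ℂ) ≠ 0 := by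
    intro h
    have h' := congrArg Complex.re h
    simp only [Complex.add_re, Complex.mul_re, Complex.ofReal_re, Complex.ofReal_im,
      Complex.zero_re, mul_zero, sub_zero] at h'
    nlinarith
  have hrne : (((B - A) / (B + A) : ℝ) : ℂ) ≠ 0 := by
    have : ((B - A) / (B + A) : ℝ) ≠ 0 := by positivity
    exact_mod_cast this
  have hveq : csqrt (z - (c:ℂ)) = (csqrt (z - (c:ℂ)) / csqrt (z - (d:ℂ))) * csqrt (z - (d:ℂ)) := by
    field_simp
  rw [Complex.ofReal_div]
  set t := csqrt (z - (c:ℂ)) / csqrt (z - (d:ℂ)) with htdef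
  rw [hveq] at hden ⊢
  clear_value t
  have hBt' : (A:ℂ) * t + B ≠ 0 := by rw [add_comm, mul_comm]; exact hBt
  push_cast at hrne ⊢
  field_simp
  ring_nf
  field_simp
  ring

end Key

theorem szegoDGap_first_order_at_infinity
    (m p : ℕ) (hm : 1 ≤ m) (hp : 1 ≤ p) (hpm : p ≤ m) (x s : ℕ → ℝ)
    (hx : ∀ j, j < m → x j < x (j + 1))
    (hs : ∀ j, 1 ≤ j → j ≤ m → j ≠ p → 0 < s j)
    (hs0 : s 0 = 1) (hsm : s (m + 1) = 1) :
    Filter.Tendsto (fun z : ℂ => z * (szegoDGap m p x s z / szegoDGapInfty m p x s - 1))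
      (Filter.comap (fun z : ℂ => ‖z‖) Filter.atTop ⊓ Filter.principal {z : ℂ | 0 < z.im})
      (nhds
        (∑ j ∈ Finset.range (p - 1),
            betaCoef s j * ↑(Real.sqrt (x p - x j) * Real.sqrt (x (p - 1) - x j))
          - ∑ j ∈ Finset.Icc (p + 1) m,
            betaCoef s j * ↑(Real.sqrt (x j - x p) * Real.sqrt (x j - x (p - 1))))) := by
  classical
  have hmono : ∀ i j : ℕ, i < j → j ≤ m → x i < x j := by
    intro i j hij hj
    induction j with
    | zero => omega
    | succ k ih =>
      rcases Nat.lt_succ_iff_lt_or_eq.mp hij with h | h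
      · exact (ih h (by omega)).trans (hx k (by omega))
      · subst h; exact hx i (by omega)
  set a := x (p - 1) with hadef
  set b := x p with hbdef
  have hab' : a < b := by
    have h := hx (p - 1) (by omega)
    rw [show p - 1 + 1 = p by omega] at h
    exact h
  set l := Filter.comap (fun z : ℂ => ‖z‖) Filter.atTop ⊓ Filter.principal {z : ℂ | 0 < z.im}
    with hldef
  have habs : Tendsto (fun z : ℂ => ‖z‖) l atTop := tendsto_comap.mono_left inf_le_left
  have him : ∀ᶠ z in l, 0 < z.im := by
    rw [hldef, eventually_inf_principal]
    exact Eventually.of_forall fun z hz => hz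
  -- low indices
  have hxlow : ∀ j ∈ Finset.range (p - 1), x j < a :=
    fun j hj => hmono j (p - 1) (Finset.mem_range.mp hj) (by omega)
  have hlowKey : ∀ j ∈ Finset.range (p - 1),
      Tendsto (fun z => z * (Rlow a b (x j) z /
          ((((Real.sqrt (b - x j) - Real.sqrt (a - x j)) /
          (Real.sqrt (b - x j) + Real.sqrt (a - x j)) : ℝ)) : ℂ) - 1)) l
        (𝓝 (((Real.sqrt (b - x j) * Real.sqrt (a - x j) : ℝ)) : ℂ)) := by
    intro j hj
    have hxj : x j < a := hxlow j hj
    have hA : 0 < Real.sqrt (a - x j) := Real.sqrt_pos.mpr (by linarith)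
    have hAB : Real.sqrt (a - x j) < Real.sqrt (b - x j) :=
      Real.sqrt_lt_sqrt (by linarith) (by linarith)
    have hkey := key_factor habs him b a (Real.sqrt (a - x j)) (Real.sqrt (b - x j)) hA hAB
    have hval : (Real.sqrt (a - x j) * Real.sqrt (b - x j) * (b - a) /
        (Real.sqrt (b - x j) ^ 2 - Real.sqrt (a - x j) ^ 2) : ℝ)
        = Real.sqrt (b - x j) * Real.sqrt (a - x j) := by
      rw [Real.sq_sqrt (by linarith), Real.sq_sqrt (by linarith),
        show b - x j - (a - x j) = b - a by ring, mul_div_assoc,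
        div_self (by linarith : b - a ≠ (0:ℝ))]
      ring
    rw [hval] at hkey
    simpa only [Rlow] using hkey
  -- high indices
  have hxhigh : ∀ j ∈ Finset.Icc (p + 1) m, b < x j := by
    intro j hj
    rw [Finset.mem_Icc] at hj
    exact hmono p j (by omega) (by omega)
  have hhighKey : ∀ j ∈ Finset.Icc (p + 1) m,
      Tendsto (fun z => z * (Rhigh a b (x j) z /
          ((((Real.sqrt (x j - a) - Real.sqrt (x j - b)) /
          (Real.sqrt (x j - a) + Real.sqrt (x j - b)) : ℝ)) : ℂ) - 1)) l
        (𝓝 ((-(Real.sqrt (x j - b) * Real.sqrt (x j - a)) : ℝ) : ℂ)) := by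
    intro j hj
    have hxj : b < x j := hxhigh j hj
    have hA : 0 < Real.sqrt (x j - b) := Real.sqrt_pos.mpr (by linarith)
    have hAB : Real.sqrt (x j - b) < Real.sqrt (x j - a) :=
      Real.sqrt_lt_sqrt (by linarith) (by linarith)
    have hkey := key_factor habs him a b (Real.sqrt (x j - b)) (Real.sqrt (x j - a)) hA hAB
    have hval : (Real.sqrt (x j - b) * Real.sqrt (x j - a) * (a - b) /
        (Real.sqrt (x j - a) ^ 2 - Real.sqrt (x j - b) ^ 2) : ℝ)
        = -(Real.sqrt (x j - b) * Real.sqrt (x j - a)) := by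
      rw [Real.sq_sqrt (by linarith), Real.sq_sqrt (by linarith),
        show x j - a - (x j - b) = b - a by ring,
        div_eq_iff (by linarith : b - a ≠ (0:ℝ))]
      ring
    rw [hval] at hkey
    simpa only [Rhigh] using hkey
  -- positivity of the limit constants r
  have hrlowpos : ∀ j ∈ Finset.range (p - 1),
      0 < (Real.sqrt (b - x j) - Real.sqrt (a - x j)) /
        (Real.sqrt (b - x j) + Real.sqrt (a - x j)) := by
    intro j hj
    have hxj : x j < a := hxlow j hj
    have hA : 0 < Real.sqrt (a - x j) := Real.sqrt_pos.mpr (by linarith)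
    have hAB : Real.sqrt (a - x j) < Real.sqrt (b - x j) :=
      Real.sqrt_lt_sqrt (by linarith) (by linarith)
    exact div_pos (by linarith) (by linarith)
  have hrhighpos : ∀ j ∈ Finset.Icc (p + 1) m,
      0 < (Real.sqrt (x j - a) - Real.sqrt (x j - b)) /
        (Real.sqrt (x j - a) + Real.sqrt (x j - b)) := by
    intro j hj
    have hxj : b < x j := hxhigh j hj
    have hA : 0 < Real.sqrt (x j - b) := Real.sqrt_pos.mpr (by linarith)
    have hAB : Real.sqrt (x j - b) < Real.sqrt (x j - a) :=
      Real.sqrt_lt_sqrt (by linarith) (by linarith)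
    exact div_pos (by linarith) (by linarith)
  -- products
  have hP : Tendsto (fun z => z * ((∏ j ∈ Finset.range (p - 1),
      (Rlow a b (x j) z / ((((Real.sqrt (b - x j) - Real.sqrt (a - x j)) /
        (Real.sqrt (b - x j) + Real.sqrt (a - x j)) : ℝ)) : ℂ)) ^ betaCoef s j) - 1)) l
      (𝓝 (∑ j ∈ Finset.range (p - 1),
        betaCoef s j * (((Real.sqrt (b - x j) * Real.sqrt (a - x j) : ℝ)) : ℂ))) :=
    gen3 habs him _ _ _
      (fun j hj => gen2 (gen1 habs him (hlowKey j hj)) (hlowKey j hj))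
  have hQ : Tendsto (fun z => z * ((∏ j ∈ Finset.Icc (p + 1) m,
      (Rhigh a b (x j) z / ((((Real.sqrt (x j - a) - Real.sqrt (x j - b)) /
        (Real.sqrt (x j - a) + Real.sqrt (x j - b)) : ℝ)) : ℂ)) ^ betaCoef s j) - 1)) l
      (𝓝 (∑ j ∈ Finset.Icc (p + 1) m,
        betaCoef s j * ((-(Real.sqrt (x j - b) * Real.sqrt (x j - a)) : ℝ) : ℂ))) :=
    gen3 habs him _ _ _
      (fun j hj => gen2 (gen1 habs him (hhighKey j hj)) (hhighKey j hj))
  have hP1 := gen1 habs him hP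
  have hQ1 := gen1 habs him hQ
  have hPQ := (hP.mul hQ1).add hQ
  rw [mul_one] at hPQ
  have hPQ' := hPQ.congr (f₂ := fun z => z * ((∏ j ∈ Finset.range (p - 1),
      (Rlow a b (x j) z / ((((Real.sqrt (b - x j) - Real.sqrt (a - x j)) /
        (Real.sqrt (b - x j) + Real.sqrt (a - x j)) : ℝ)) : ℂ)) ^ betaCoef s j) *
      (∏ j ∈ Finset.Icc (p + 1) m,
      (Rhigh a b (x j) z / ((((Real.sqrt (x j - a) - Real.sqrt (x j - b)) /
        (Real.sqrt (x j - a) + Real.sqrt (x j - b)) : ℝ)) : ℂ)) ^ betaCoef s j) - 1))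
    (fun z => by ring)
  -- identify limit value
  have hlim : (∑ j ∈ Finset.range (p - 1),
        betaCoef s j * (((Real.sqrt (b - x j) * Real.sqrt (a - x j) : ℝ)) : ℂ)) +
      (∑ j ∈ Finset.Icc (p + 1) m,
        betaCoef s j * ((-(Real.sqrt (x j - b) * Real.sqrt (x j - a)) : ℝ) : ℂ))
      = (∑ j ∈ Finset.range (p - 1),
            betaCoef s j * ↑(Real.sqrt (b - x j) * Real.sqrt (a - x j))
          - ∑ j ∈ Finset.Icc (p + 1) m,
            betaCoef s j * ↑(Real.sqrt (x j - b) * Real.sqrt (x j - a))) := by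
    rw [sub_eq_add_neg, ← Finset.sum_neg_distrib]
    congr 1
    apply Finset.sum_congr rfl
    intro j hj
    push_cast
    ring
  rw [hlim] at hPQ'
  -- eventual equality with the target function
  refine hPQ'.congr' ?_
  have e1 : ∀ᶠ z in l, ∀ j ∈ Finset.range (p - 1),
      Rlow a b (x j) z / ((((Real.sqrt (b - x j) - Real.sqrt (a - x j)) /
        (Real.sqrt (b - x j) + Real.sqrt (a - x j)) : ℝ)) : ℂ) ≠ 0 :=
    (eventually_all_finset _).mpr fun j hj =>
      (gen1 habs him (hlowKey j hj)).eventually_ne one_ne_zero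
  have e2 : ∀ᶠ z in l, ∀ j ∈ Finset.Icc (p + 1) m,
      Rhigh a b (x j) z / ((((Real.sqrt (x j - a) - Real.sqrt (x j - b)) /
        (Real.sqrt (x j - a) + Real.sqrt (x j - b)) : ℝ)) : ℂ) ≠ 0 :=
    (eventually_all_finset _).mpr fun j hj =>
      (gen1 habs him (hhighKey j hj)).eventually_ne one_ne_zero
  filter_upwards [him, e1, e2] with z hz h1 h2
  have hDinf_ne : szegoDGapInfty m p x s ≠ 0 := by
    rw [szegoDGapInfty, ← hadef, ← hbdef]
    apply mul_ne_zero <;>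
    · rw [Finset.prod_ne_zero_iff]
      intro j hj
      simp only [ne_eq, Complex.cpow_eq_zero_iff, not_and_or, not_not]
      left
      first
      | exact Complex.ofReal_ne_zero.mpr (ne_of_gt (hrlowpos j hj))
      | exact Complex.ofReal_ne_zero.mpr (ne_of_gt (hrhighpos j hj))
  have hDval : szegoDGap m p x s z =
      ((∏ j ∈ Finset.range (p - 1),
      (Rlow a b (x j) z / ((((Real.sqrt (b - x j) - Real.sqrt (a - x j)) /
        (Real.sqrt (b - x j) + Real.sqrt (a - x j)) : ℝ)) : ℂ)) ^ betaCoef s j) *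
      (∏ j ∈ Finset.Icc (p + 1) m,
      (Rhigh a b (x j) z / ((((Real.sqrt (x j - a) - Real.sqrt (x j - b)) /
        (Real.sqrt (x j - a) + Real.sqrt (x j - b)) : ℝ)) : ℂ)) ^ betaCoef s j)) *
      szegoDGapInfty m p x s := by
    rw [szegoDGap, if_pos hz, szegoDGapInfty, ← hadef, ← hbdef]
    have hfacL : ∀ j ∈ Finset.range (p - 1), Rlow a b (x j) z ^ betaCoef s j
        = (Rlow a b (x j) z / ((((Real.sqrt (b - x j) - Real.sqrt (a - x j)) /
          (Real.sqrt (b - x j) + Real.sqrt (a - x j)) : ℝ)) : ℂ)) ^ betaCoef s j *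
          (((((Real.sqrt (b - x j) - Real.sqrt (a - x j)) /
          (Real.sqrt (b - x j) + Real.sqrt (a - x j)) : ℝ)) : ℂ)) ^ betaCoef s j := by
      intro j hj
      have hrpos := hrlowpos j hj
      have hrne : ((((Real.sqrt (b - x j) - Real.sqrt (a - x j)) /
          (Real.sqrt (b - x j) + Real.sqrt (a - x j)) : ℝ)) : ℂ) ≠ 0 :=
        Complex.ofReal_ne_zero.mpr (ne_of_gt hrpos)
      conv_lhs => rw [show Rlow a b (x j) z = (Rlow a b (x j) z /
        ((((Real.sqrt (b - x j) - Real.sqrt (a - x j)) /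
          (Real.sqrt (b - x j) + Real.sqrt (a - x j)) : ℝ)) : ℂ)) *
        ((((Real.sqrt (b - x j) - Real.sqrt (a - x j)) /
          (Real.sqrt (b - x j) + Real.sqrt (a - x j)) : ℝ)) : ℂ) from (div_mul_cancel₀ _ hrne).symm]
      exact cpow_mul_ofReal_pos (h1 j hj) hrpos _
    have hfacH : ∀ j ∈ Finset.Icc (p + 1) m, Rhigh a b (x j) z ^ betaCoef s j
        = (Rhigh a b (x j) z / ((((Real.sqrt (x j - a) - Real.sqrt (x j - b)) /
          (Real.sqrt (x j - a) + Real.sqrt (x j - b)) : ℝ)) : ℂ)) ^ betaCoef s j *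
          (((((Real.sqrt (x j - a) - Real.sqrt (x j - b)) /
          (Real.sqrt (x j - a) + Real.sqrt (x j - b)) : ℝ)) : ℂ)) ^ betaCoef s j := by
      intro j hj
      have hrpos := hrhighpos j hj
      have hrne : ((((Real.sqrt (x j - a) - Real.sqrt (x j - b)) /
          (Real.sqrt (x j - a) + Real.sqrt (x j - b)) : ℝ)) : ℂ) ≠ 0 :=
        Complex.ofReal_ne_zero.mpr (ne_of_gt hrpos)
      conv_lhs => rw [show Rhigh a b (x j) z = (Rhigh a b (x j) z /
        ((((Real.sqrt (x j - a) - Real.sqrt (x j - b)) /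
          (Real.sqrt (x j - a) + Real.sqrt (x j - b)) : ℝ)) : ℂ)) *
        ((((Real.sqrt (x j - a) - Real.sqrt (x j - b)) /
          (Real.sqrt (x j - a) + Real.sqrt (x j - b)) : ℝ)) : ℂ) from (div_mul_cancel₀ _ hrne).symm]
      exact cpow_mul_ofReal_pos (h2 j hj) hrpos _
    rw [Finset.prod_congr rfl hfacL, Finset.prod_congr rfl hfacH,
      Finset.prod_mul_distrib, Finset.prod_mul_distrib]
    ring
  rw [hDval, mul_div_assoc, div_self hDinf_ne, mul_one]
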